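/- arXiv:0908.1895 — 2 statements merged into one kernel-verified Lean document; each statement's English description precedes it below -/
import Mathlib

section
/- Let 0 < α < 2, M ≥ 0, C ≥ 0 and 0 < D < 1. Let g : ℝ → ℝ be a function with |g(z)| ≤ M for all z ∈ ℝ. Let (E_k)_{k≥1} be an i.i.d. sequence of exponential random variables with mean one and Γ_k = E_1 + ⋯ + E_k. Let (Z_{k,j})_{k≥1, j∈ℤ∖{0}} be arbitrary real random variables on the same probability space, and let (c_j)_{j∈ℤ} be real numbers with |c_j| ≤ C·D^{|j|} for all j. Then, almost surely, ∑_{k=1}^∞ ∑_{j≠0} |c_j · (Γ_k^{−1/α} − k^{−1/α}) · g(Z_{k,j})| < ∞. -/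
/-!
Since `|c_j g(Z_{k,j})| ≤ C M D^{|j|}`, the double series is dominated by the product of the
geometric series `∑_j D^{|j|}` and `∑_k |Γ_k^{-1/α} - k^{-1/α}|`. For the latter, Chernoff's
bound with the exponential moment generating function `(1 - t)⁻¹` gives
`P(|Γ_k - k| ≥ k^γ) ≤ 2 exp(-k^{2γ-1}/4)`, so by Borel–Cantelli `|Γ_k - k| < k^γ` eventually,
for any `1/2 < γ ≤ 1`. The mean value theorem then bounds the `k`-th term by a multiple of
`k^{γ - 1/α - 1}`, which is summable once `γ < 1/α`; such a `γ` exists because `α < 2`.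
-/

open MeasureTheory ProbabilityTheory Filter Real
open scoped ENNReal

lemma exp_neg_mul_inv_one_sub_le_exp_sq {t : ℝ} (ht : |t| ≤ 1 / 2) :
    exp (-t) * (1 - t)⁻¹ ≤ exp (t ^ 2) := by
  obtain ⟨ht₁, ht₂⟩ := abs_le.1 ht
  have key : 1 ≤ (1 - t) * exp (t + t ^ 2) := by
    rcases le_total t 0 with h | h
    · nlinarith [add_one_le_exp (t + t ^ 2), pow_two_nonneg t]
    · nlinarith [quadratic_le_exp_of_nonneg (by positivity : 0 ≤ t + t ^ 2), pow_two_nonneg t]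
  rw [← div_eq_mul_inv, div_le_iff₀ (by linarith)]
  calc exp (-t) ≤ exp (-t) * ((1 - t) * exp (t + t ^ 2)) :=
        le_mul_of_one_le_right (exp_pos _).le key
    _ = exp (t ^ 2) * (1 - t) := by rw [exp_add, exp_neg]; field_simp

lemma mgf_id_expMeasure_one {t : ℝ} (ht : t < 1) : mgf id (expMeasure 1) t = (1 - t)⁻¹ := by
  have hdens : ∀ x, (gammaPDF 1 1 x).toReal • exp (t * id x)
      = (Set.Ici 0).indicator (fun x => exp ((t - 1) * x)) x := by
    intro x
    by_cases hx : 0 ≤ x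
    · rw [Set.indicator_of_mem (Set.mem_Ici.2 hx), gammaPDF_of_nonneg hx,
        ENNReal.toReal_ofReal (by positivity), smul_eq_mul]
      simp only [rpow_one, Gamma_one, div_one, sub_self, rpow_zero, one_mul, id, ← exp_add]
      ring_nf
    · simp [gammaPDF, gammaPDFReal, hx]
  rw [mgf, expMeasure, gammaMeasure,
    integral_withDensity_eq_integral_toReal_smul
      (show Measurable (gammaPDF 1 1) from (measurable_gammaPDFReal 1 1).ennreal_ofReal)
      (ae_of_all _ fun _ => ENNReal.ofReal_lt_top)]
  simp_rw [hdens]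
  rw [integral_indicator measurableSet_Ici, integral_Ici_eq_integral_Ioi,
    integral_exp_mul_Ioi (by linarith) 0, mul_zero, exp_zero, neg_div, ← div_neg, neg_sub, one_div]

lemma summable_exp_neg_mul_rpow {a c : ℝ} (ha : 0 < a) (hc : 0 < c) :
    Summable fun k : ℕ => exp (-(c * k ^ a)) := by
  have h := ((isLittleO_exp_neg_mul_rpow_atTop hc (-2 / a)).comp_tendsto
    ((tendsto_rpow_atTop ha).comp tendsto_natCast_atTop_atTop)).isBigO
  refine summable_of_isBigO_nat (Real.summable_nat_rpow.2 (by norm_num : (-2 : ℝ) < -1)) ?_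
  refine h.congr (fun k => ?_) (fun k => ?_)
  · simp [neg_mul]
  · simp only [Function.comp_apply]
    rw [← rpow_mul (Nat.cast_nonneg k)]
    field_simp

section ExponentialSums

variable {Ω : Type*} [MeasurableSpace Ω] {μ : Measure Ω} {E : ℕ → Ω → ℝ}

lemma mgf_sum_range_of_expMeasure_one (hEmeas : ∀ i, Measurable (E i)) (hEindep : iIndepFun E μ)
    (hEdist : ∀ i, μ.map (E i) = expMeasure 1) {t : ℝ} (ht : t < 1) (k : ℕ) :
    mgf (∑ i ∈ Finset.range k, E i) μ t = (1 - t)⁻¹ ^ k := by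
  rw [hEindep.mgf_sum hEmeas, Finset.prod_congr rfl fun i _ => ?_, Finset.prod_const,
    Finset.card_range]
  rw [← mgf_id_map (hEmeas i).aemeasurable, hEdist i, mgf_id_expMeasure_one ht]

lemma exp_neg_mul_mul_mgf_sum_range_le (hEmeas : ∀ i, Measurable (E i))
    (hEindep : iIndepFun E μ) (hEdist : ∀ i, μ.map (E i) = expMeasure 1) {t : ℝ}
    (ht : |t| ≤ 1 / 2) (k : ℕ) :
    exp (-t * k) * mgf (∑ i ∈ Finset.range k, E i) μ t ≤ exp (k * t ^ 2) := by
  have ht₁ : t < 1 := by linarith [le_abs_self t]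
  rw [mgf_sum_range_of_expMeasure_one hEmeas hEindep hEdist ht₁]
  calc exp (-t * k) * (1 - t)⁻¹ ^ k = (exp (-t) * (1 - t)⁻¹) ^ k := by
        rw [mul_pow, ← exp_nat_mul]; ring_nf
    _ ≤ exp (t ^ 2) ^ k :=
        pow_le_pow_left₀ (mul_nonneg (exp_pos _).le (inv_nonneg.2 (by linarith)))
          (exp_neg_mul_inv_one_sub_le_exp_sq ht) k
    _ = exp (k * t ^ 2) := (exp_nat_mul _ _).symm

lemma measureReal_le_abs_sum_range_sub_le [IsProbabilityMeasure μ]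
    (hEmeas : ∀ i, Measurable (E i)) (hEindep : iIndepFun E μ)
    (hEdist : ∀ i, μ.map (E i) = expMeasure 1) {k : ℕ} (hk : 0 < k) {x : ℝ} (hx₀ : 0 ≤ x)
    (hxk : x ≤ k) :
    μ.real {ω | x ≤ |(∑ i ∈ Finset.range k, E i) ω - k|} ≤ 2 * exp (-(x ^ 2 / (4 * k))) := by
  set S := ∑ i ∈ Finset.range k, E i
  have hk₀ : (0 : ℝ) < k := Nat.cast_pos.2 hk
  -- the minimiser of `-t x + k t²`, the exponent of both Chernoff bounds below
  set t := x / (2 * k)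
  have ht₀ : 0 ≤ t := by positivity
  have ht : |t| ≤ 1 / 2 := by
    rw [abs_of_nonneg ht₀, div_le_iff₀ (by positivity)]; linarith
  have hint : ∀ s : ℝ, |s| ≤ 1 / 2 → Integrable (fun ω => exp (s * S ω)) μ := fun s hs =>
    mgf_pos_iff.1 <| by
      rw [mgf_sum_range_of_expMeasure_one hEmeas hEindep hEdist (by linarith [le_abs_self s])]
      exact pow_pos (inv_pos.2 (by linarith [le_abs_self s])) k
  have hexp : exp (-t * x) * exp (k * t ^ 2) = exp (-(x ^ 2 / (4 * k))) := by
    rw [← exp_add]; congr 1; simp only [t]; field_simp; ring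
  have hupper : μ.real {ω | k + x ≤ S ω} ≤ exp (-(x ^ 2 / (4 * k))) := by
    calc μ.real {ω | k + x ≤ S ω} ≤ exp (-t * (k + x)) * mgf S μ t :=
          measure_ge_le_exp_mul_mgf _ ht₀ (hint t ht)
      _ = exp (-t * x) * (exp (-t * k) * mgf S μ t) := by
          rw [← mul_assoc, ← exp_add]; ring_nf
      _ ≤ exp (-t * x) * exp (k * t ^ 2) := by
          gcongr; exact exp_neg_mul_mul_mgf_sum_range_le hEmeas hEindep hEdist ht k
      _ = _ := hexp
  have hlower : μ.real {ω | S ω ≤ k - x} ≤ exp (-(x ^ 2 / (4 * k))) := by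
    have ht' : |-t| ≤ 1 / 2 := by rwa [abs_neg]
    calc μ.real {ω | S ω ≤ k - x} ≤ exp (-(-t) * (k - x)) * mgf S μ (-t) :=
          measure_le_le_exp_mul_mgf _ (neg_nonpos.2 ht₀) (hint (-t) ht')
      _ = exp (-t * x) * (exp (-(-t) * k) * mgf S μ (-t)) := by
          rw [← mul_assoc, ← exp_add]; ring_nf
      _ ≤ exp (-t * x) * exp (k * (-t) ^ 2) := by
          gcongr; exact exp_neg_mul_mul_mgf_sum_range_le hEmeas hEindep hEdist ht' k
      _ = _ := by rw [neg_sq, hexp]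
  have hsub : {ω | x ≤ |S ω - k|} ⊆ {ω | k + x ≤ S ω} ∪ {ω | S ω ≤ k - x} := by
    intro ω (hω : x ≤ |S ω - k|)
    rcases le_abs.1 hω with h | h
    · exact Or.inl (show k + x ≤ S ω by linarith)
    · exact Or.inr (show S ω ≤ k - x by linarith)
  calc μ.real {ω | x ≤ |S ω - k|} ≤ μ.real ({ω | k + x ≤ S ω} ∪ {ω | S ω ≤ k - x}) :=
        measureReal_mono hsub
    _ ≤ μ.real {ω | k + x ≤ S ω} + μ.real {ω | S ω ≤ k - x} := measureReal_union_le _ _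
    _ ≤ 2 * exp (-(x ^ 2 / (4 * k))) := by linarith

lemma ae_eventually_abs_sum_range_sub_lt_rpow [IsProbabilityMeasure μ]
    (hEmeas : ∀ i, Measurable (E i)) (hEindep : iIndepFun E μ)
    (hEdist : ∀ i, μ.map (E i) = expMeasure 1) {γ : ℝ} (hγ₁ : 1 / 2 < γ) (hγ₂ : γ ≤ 1) :
    ∀ᵐ ω ∂μ, ∀ᶠ k : ℕ in atTop, |(∑ i ∈ Finset.range k, E i) ω - k| < (k : ℝ) ^ γ := by
  set A : ℕ → Set Ω := fun k => {ω | (k : ℝ) ^ γ ≤ |(∑ i ∈ Finset.range k, E i) ω - k|}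
  have ha : 0 < 2 * γ - 1 := by linarith
  have hA : ∀ k, μ (A k) ≤ ENNReal.ofReal (2 * exp (-(1 / 4 * (k : ℝ) ^ (2 * γ - 1)))) := by
    intro k
    rcases k.eq_zero_or_pos with rfl | hk
    · simpa [Real.zero_rpow ha.ne'] using prob_le_one.trans (by norm_num : (1 : ℝ≥0∞) ≤ 2)
    have hk₀ : (0 : ℝ) < k := Nat.cast_pos.2 hk
    have hexp : ((k : ℝ) ^ γ) ^ 2 / (4 * k) = 1 / 4 * (k : ℝ) ^ (2 * γ - 1) := by
      rw [← rpow_natCast, ← rpow_mul hk₀.le, rpow_sub hk₀, rpow_one]; push_cast; ring_nf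
    rw [← ofReal_measureReal, ← hexp]
    gcongr
    exact measureReal_le_abs_sum_range_sub_le hEmeas hEindep hEdist hk (by positivity)
      (rpow_le_self_of_one_le (Nat.one_le_cast.2 hk) hγ₂)
  have hsum : ∑' k, μ (A k) ≠ ⊤ := by
    refine ne_top_of_le_ne_top ?_ (ENNReal.tsum_le_tsum hA)
    rw [← ENNReal.ofReal_tsum_of_nonneg (fun k => by positivity)
      ((summable_exp_neg_mul_rpow ha (by norm_num)).mul_left 2)]
    exact ENNReal.ofReal_ne_top
  filter_upwards [ae_eventually_notMem hsum] with ω hω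
  exact hω.mono fun k hk => not_le.1 hk

end ExponentialSums

lemma abs_rpow_neg_sub_rpow_neg_le {β K y z : ℝ} (hβ : 0 < β) (hK : 0 < K) (hy : K ≤ y)
    (hz : K ≤ z) : |y ^ (-β) - z ^ (-β)| ≤ β * K ^ (-β - 1) * |y - z| := by
  have hderiv : ∀ x ∈ Set.Ici K,
      HasDerivWithinAt (fun x : ℝ => x ^ (-β)) (-β * x ^ (-β - 1)) (Set.Ici K) x := fun x hx =>
    (hasDerivAt_rpow_const (Or.inl (hK.trans_le hx).ne')).hasDerivWithinAt
  have hbound : ∀ x ∈ Set.Ici K, ‖-β * x ^ (-β - 1)‖ ≤ β * K ^ (-β - 1) := fun x hx => by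
    rw [norm_mul, norm_neg, Real.norm_of_nonneg hβ.le,
      Real.norm_of_nonneg (rpow_nonneg (hK.le.trans hx) _)]
    exact mul_le_mul_of_nonneg_left (rpow_le_rpow_of_nonpos hK hx (by linarith)) hβ.le
  simpa only [Real.norm_eq_abs] using
    (convex_Ici K).norm_image_sub_le_of_norm_hasDerivWithin_le hderiv hbound hz hy

lemma summable_abs_rpow_neg_sub_of_eventually_abs_sub_lt {β γ : ℝ} (hβ : 0 < β) (hγβ : γ < β)
    (hγ : γ < 1) {G : ℕ → ℝ} (hG : ∀ᶠ k : ℕ in atTop, |G k - k| < (k : ℝ) ^ γ) :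
    Summable fun k : ℕ => |G k ^ (-β) - (k : ℝ) ^ (-β)| := by
  have hsmall : ∀ᶠ k : ℕ in atTop, (k : ℝ) ^ (γ - 1) ≤ 1 / 2 := by
    have := (tendsto_rpow_neg_atTop (by linarith : 0 < 1 - γ)).comp tendsto_natCast_atTop_atTop
    simpa using (this.eventually_le_const (by norm_num : (0 : ℝ) < 1 / 2))
  refine Summable.of_norm_bounded_eventually_nat
    ((Real.summable_nat_rpow.2 (by linarith : γ - β - 1 < -1)).mul_left (β * 2 ^ (β + 1))) ?_
  filter_upwards [hG, hsmall, eventually_gt_atTop 0] with k hGk hk hk₀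
  have hk₀ : (0 : ℝ) < k := Nat.cast_pos.2 hk₀
  have hhalf : (k : ℝ) ^ γ ≤ k / 2 := by
    calc (k : ℝ) ^ γ = (k : ℝ) ^ (γ - 1) * k := by
          rw [rpow_sub hk₀, rpow_one, div_mul_cancel₀ _ hk₀.ne']
      _ ≤ 1 / 2 * k := by gcongr
      _ = k / 2 := by ring
  have hGk' : (k : ℝ) / 2 ≤ G k := by linarith [(abs_lt.1 hGk).1]
  rw [Real.norm_eq_abs, abs_abs]
  calc |G k ^ (-β) - (k : ℝ) ^ (-β)|
      ≤ β * ((k : ℝ) / 2) ^ (-β - 1) * |G k - k| :=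
        abs_rpow_neg_sub_rpow_neg_le hβ (by positivity) hGk' (by linarith)
    _ ≤ β * ((k : ℝ) / 2) ^ (-β - 1) * (k : ℝ) ^ γ := by gcongr
    _ = β * 2 ^ (β + 1) * (k : ℝ) ^ (γ - β - 1) := by
        rw [div_rpow hk₀.le zero_le_two, div_eq_mul_inv, ← rpow_neg zero_le_two,
          show γ - β - 1 = (-β - 1) + γ by ring, rpow_add hk₀]
        ring_nf

lemma summable_pow_natAbs {D : ℝ} (hD₀ : 0 ≤ D) (hD₁ : D < 1) :
    Summable fun j : ℤ => D ^ j.natAbs :=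
  .of_nat_of_neg (by simpa using summable_geometric_of_lt_one hD₀ hD₁)
    (by simpa using summable_geometric_of_lt_one hD₀ hD₁)

theorem stmt_1_general
    {Ω : Type*} [MeasureSpace Ω] [IsProbabilityMeasure (ℙ : Measure Ω)]
    (α M C D : ℝ) (hα0 : 0 < α) (hα2 : α < 2) (hM : 0 ≤ M)
    (hD0 : 0 < D) (hD1 : D < 1)
    (g : ℝ → ℝ) (hg : ∀ z : ℝ, |g z| ≤ M)
    (c : ℤ → ℝ) (hc : ∀ j : ℤ, |c j| ≤ C * D ^ j.natAbs)
    (E : ℕ → Ω → ℝ) (hEmeas : ∀ i, Measurable (E i))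
    (hEindep : iIndepFun E ℙ)
    (hEdist : ∀ i, Measure.map (E i) ℙ = expMeasure 1)
    (Γ : ℕ → Ω → ℝ) (hΓ : ∀ k ω, Γ k ω = ∑ i ∈ Finset.range k, E i ω)
    (Z : ℕ → {j : ℤ // j ≠ 0} → Ω → ℝ) :
    ∀ᵐ ω ∂ℙ, Summable (fun p : ℕ × {j : ℤ // j ≠ 0} =>
      |c p.2 * ((Γ (p.1 + 1) ω) ^ (-(1 / α)) - ((p.1 : ℝ) + 1) ^ (-(1 / α))) *
        g (Z (p.1 + 1) p.2 ω)|) := by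
  have hβ : 1 / 2 < 1 / α := by rw [lt_div_iff₀ hα0]; linarith
  obtain ⟨γ, hγ₁, hγ⟩ := exists_between (lt_min hβ one_half_lt_one)
  obtain ⟨hγβ, hγ₂⟩ := lt_min_iff.1 hγ
  filter_upwards [ae_eventually_abs_sum_range_sub_lt_rpow hEmeas hEindep hEdist hγ₁ hγ₂.le]
    with ω hω
  simp only [Finset.sum_apply, ← hΓ] at hω
  have hΔ := (summable_nat_add_iff 1).2
    (summable_abs_rpow_neg_sub_of_eventually_abs_sub_lt (by positivity) hγβ hγ₂ hω)
  push_cast at hΔ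
  have hcD : Summable fun j : {j : ℤ // j ≠ 0} => C * D ^ (j : ℤ).natAbs :=
    ((summable_pow_natAbs hD0.le hD1).comp_injective Subtype.val_injective).mul_left C
  refine .of_nonneg_of_le (fun _ => abs_nonneg _) (fun p => ?_)
    ((hΔ.mul_right M).mul_of_nonneg hcD (fun _ => mul_nonneg (abs_nonneg _) hM)
      (fun j => (abs_nonneg _).trans (hc j)))
  set Δ := Γ (p.1 + 1) ω ^ (-(1 / α)) - ((p.1 : ℝ) + 1) ^ (-(1 / α))
  calc |c p.2 * Δ * g (Z (p.1 + 1) p.2 ω)| = |c p.2| * (|Δ| * |g (Z (p.1 + 1) p.2 ω)|) := by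
        rw [abs_mul, abs_mul, mul_assoc]
    _ ≤ C * D ^ (p.2 : ℤ).natAbs * (|Δ| * M) :=
        mul_le_mul (hc _) (mul_le_mul_of_nonneg_left (hg _) (abs_nonneg _)) (by positivity)
          ((abs_nonneg _).trans (hc _))
    _ = |Δ| * M * (C * D ^ (p.2 : ℤ).natAbs) := mul_comm _ _

/-- Lemma A.2: almost surely,
`∑_{k≥1} ∑_{j≠0} |c_j (Γ_k^{-1/α} - k^{-1/α}) g(Z_{k,j})| < ∞`
when `g` is bounded, the `c_j` decay geometrically, and `Γ_k` are partial
sums of i.i.d. mean-one exponentials. -/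
theorem stmt_1
    {Ω : Type*} [MeasureSpace Ω] [IsProbabilityMeasure (ℙ : Measure Ω)]
    (α M C D : ℝ) (hα0 : 0 < α) (hα2 : α < 2) (hM : 0 ≤ M)
    (hC : 0 ≤ C) (hD0 : 0 < D) (hD1 : D < 1)
    (g : ℝ → ℝ) (hg : ∀ z : ℝ, |g z| ≤ M)
    (c : ℤ → ℝ) (hc : ∀ j : ℤ, |c j| ≤ C * D ^ j.natAbs)
    (E : ℕ → Ω → ℝ) (hEmeas : ∀ i, Measurable (E i))
    (hEindep : iIndepFun E ℙ)
    (hEdist : ∀ i, Measure.map (E i) ℙ = expMeasure 1)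
    (Γ : ℕ → Ω → ℝ) (hΓ : ∀ k ω, Γ k ω = ∑ i ∈ Finset.range k, E i ω)
    (Z : ℕ → {j : ℤ // j ≠ 0} → Ω → ℝ) :
    ∀ᵐ ω ∂ℙ, Summable (fun p : ℕ × {j : ℤ // j ≠ 0} =>
      |c p.2 * ((Γ (p.1 + 1) ω) ^ (-(1 / α)) - ((p.1 : ℝ) + 1) ^ (-(1 / α))) *
        g (Z (p.1 + 1) p.2 ω)|) :=
  stmt_1_general α M C D hα0 hα2 hM hD0 hD1 g hg c hc E hEmeas hEindep hEdist Γ hΓ Z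
end

section
/- Let p ≥ 1 and for each j ∈ ℤ let c_j : ℝ^p → ℝ be a linear map. Suppose that for every u ∈ ℝ^p there exist constants C(u) > 0 and D(u) ∈ (0,1) such that |c_j(u)| ≤ C(u)·D(u)^{|j|} for all j ∈ ℤ. Then for every T > 0 there exist constants C₁ > 0 and D₁ ∈ (0,1) such that sup_{‖u‖ ≤ T} |c_j(u)| ≤ C₁·D₁^{|j|} for all j ∈ ℤ. -/
/-! A linear functional on a finite-dimensional Euclidean space is controlled on the ball of
radius `T` by `T` times the sum of its values (in absolute value) on an orthonormal basis. For
the functionals `c j`, each of these finitely many coefficient sequences `j ↦ |c j (b i)|` decays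
geometrically by hypothesis, and a finite sum of geometrically decaying sequences decays
geometrically with the largest of the ratios. -/

def GeomDecay (a : ℤ → ℝ) : Prop :=
  ∃ C : ℝ, 0 < C ∧ ∃ D : ℝ, 0 < D ∧ D < 1 ∧ ∀ j : ℤ, |a j| ≤ C * D ^ j.natAbs

namespace GeomDecay

theorem zero : GeomDecay 0 :=
  ⟨1, one_pos, 1 / 2, by norm_num, by norm_num, fun j => by simp⟩

theorem of_abs_le {a b : ℤ → ℝ} (hb : GeomDecay b) (hab : ∀ j, |a j| ≤ |b j|) :
    GeomDecay a := by
  obtain ⟨C, hC, D, hD0, hD1, hbd⟩ := hb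
  exact ⟨C, hC, D, hD0, hD1, fun j => (hab j).trans (hbd j)⟩

theorem abs {a : ℤ → ℝ} (ha : GeomDecay a) : GeomDecay fun j => |a j| :=
  ha.of_abs_le fun j => (abs_abs (a j)).le

theorem add {a b : ℤ → ℝ} (ha : GeomDecay a) (hb : GeomDecay b) : GeomDecay (a + b) := by
  obtain ⟨C₁, hC₁, D₁, hD₁0, hD₁1, ha⟩ := ha
  obtain ⟨C₂, hC₂, D₂, hD₂0, hD₂1, hb⟩ := hb
  refine ⟨C₁ + C₂, by positivity, max D₁ D₂, lt_max_of_lt_left hD₁0, max_lt hD₁1 hD₂1,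
    fun j => ?_⟩
  have hpow₁ : D₁ ^ j.natAbs ≤ max D₁ D₂ ^ j.natAbs :=
    pow_le_pow_left₀ hD₁0.le (le_max_left _ _) _
  have hpow₂ : D₂ ^ j.natAbs ≤ max D₁ D₂ ^ j.natAbs :=
    pow_le_pow_left₀ hD₂0.le (le_max_right _ _) _
  calc |a j + b j| ≤ |a j| + |b j| := abs_add_le _ _
    _ ≤ C₁ * D₁ ^ j.natAbs + C₂ * D₂ ^ j.natAbs := add_le_add (ha j) (hb j)
    _ ≤ (C₁ + C₂) * max D₁ D₂ ^ j.natAbs := by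
      rw [add_mul]; gcongr

theorem sum {ι : Type*} (s : Finset ι) {a : ι → ℤ → ℝ} (ha : ∀ i ∈ s, GeomDecay (a i)) :
    GeomDecay fun j => ∑ i ∈ s, a i j := by
  convert Finset.sum_induction a GeomDecay (fun _ _ => add) zero ha using 1
  exact funext fun j => (Finset.sum_apply j s a).symm

end GeomDecay

theorem OrthonormalBasis.abs_apply_le_norm_mul_sum {ι E : Type*} [Fintype ι]
    [NormedAddCommGroup E] [InnerProductSpace ℝ E] (b : OrthonormalBasis ι ℝ E)
    (ℓ : E →ₗ[ℝ] ℝ) (u : E) : |ℓ u| ≤ ‖u‖ * ∑ i, |ℓ (b i)| := by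
  have hcoord : ∀ i, |b.repr u i| ≤ ‖u‖ := fun i => by
    simpa only [Real.norm_eq_abs, LinearIsometryEquiv.norm_map] using
      PiLp.norm_apply_le (b.repr u) i
  calc |ℓ u| = |∑ i, b.repr u i * ℓ (b i)| := by
        conv_lhs => rw [← b.sum_repr u]
        simp only [map_sum, map_smul, smul_eq_mul]
    _ ≤ ∑ i, |b.repr u i| * |ℓ (b i)| := by
        simpa only [abs_mul] using
          Finset.abs_sum_le_sum_abs (fun i => b.repr u i * ℓ (b i)) Finset.univ
    _ ≤ ∑ i, ‖u‖ * |ℓ (b i)| :=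
        Finset.sum_le_sum fun i _ => mul_le_mul_of_nonneg_right (hcoord i) (abs_nonneg _)
    _ = ‖u‖ * ∑ i, |ℓ (b i)| := (Finset.mul_sum _ _ _).symm

theorem stmt_17_general (p : ℕ)
    (c : ℤ → EuclideanSpace ℝ (Fin p) →ₗ[ℝ] ℝ)
    (hgeo : ∀ u : EuclideanSpace ℝ (Fin p), ∃ C : ℝ, 0 < C ∧ ∃ D : ℝ,
      0 < D ∧ D < 1 ∧ ∀ j : ℤ, |c j u| ≤ C * D ^ j.natAbs) :
    ∀ T : ℝ, 0 < T → ∃ C₁ : ℝ, 0 < C₁ ∧ ∃ D₁ : ℝ, 0 < D₁ ∧ D₁ < 1 ∧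
      ∀ j : ℤ, ∀ u : EuclideanSpace ℝ (Fin p), ‖u‖ ≤ T →
        |c j u| ≤ C₁ * D₁ ^ j.natAbs := by
  intro T hT
  let b := EuclideanSpace.basisFun (Fin p) ℝ
  have hsum : GeomDecay fun j => ∑ i, |c j (b i)| :=
    GeomDecay.sum _ fun i _ => GeomDecay.abs (hgeo (b i))
  obtain ⟨C, hC, D, hD0, hD1, hbd⟩ := hsum
  refine ⟨T * C, mul_pos hT hC, D, hD0, hD1, fun j u hu => ?_⟩
  calc |c j u| ≤ ‖u‖ * ∑ i, |c j (b i)| := b.abs_apply_le_norm_mul_sum (c j) u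
    _ ≤ T * (C * D ^ j.natAbs) := by
        gcongr
        exact (le_abs_self _).trans (hbd j)
    _ = T * C * D ^ j.natAbs := (mul_assoc _ _ _).symm

/-- If each `c_j : ℝ^p → ℝ` is linear and for every `u` there are constants
`C(u) > 0`, `D(u) ∈ (0,1)` with `|c_j(u)| ≤ C(u) D(u)^{|j|}` for all `j`, then
for every `T > 0` there are `C₁ > 0`, `D₁ ∈ (0,1)` with
`sup_{‖u‖≤T} |c_j(u)| ≤ C₁ D₁^{|j|}` for all `j`. -/
theorem stmt_17 (p : ℕ) (hp : 1 ≤ p)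
    (c : ℤ → EuclideanSpace ℝ (Fin p) →ₗ[ℝ] ℝ)
    (hgeo : ∀ u : EuclideanSpace ℝ (Fin p), ∃ C : ℝ, 0 < C ∧ ∃ D : ℝ,
      0 < D ∧ D < 1 ∧ ∀ j : ℤ, |c j u| ≤ C * D ^ j.natAbs) :
    ∀ T : ℝ, 0 < T → ∃ C₁ : ℝ, 0 < C₁ ∧ ∃ D₁ : ℝ, 0 < D₁ ∧ D₁ < 1 ∧
      ∀ j : ℤ, ∀ u : EuclideanSpace ℝ (Fin p), ‖u‖ ≤ T →
        |c j u| ≤ C₁ * D₁ ^ j.natAbs :=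
  stmt_17_general p c hgeo
end
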